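/- Let H be a complex Hilbert space equipped with the triple product {a,b,c} = ½(⟨a,b⟩c + ⟨c,b⟩a), let F be an anisotropic Jordan Banach triple, and let T : H → F be a generalised triple homomorphism. If (xₙ) is a norm-null sequence in H with T(xₙ) → z in F, then {T(a), z, T(c)} = 0 for all a, c ∈ H. -/

import Mathlib

open Filter Topology

/-!
Every `w` in the separating space of `T` satisfies `{w,w,w} = 0`. Indeed, if `bₙ → 0` and
`T bₙ → w`, then `T {bₙ,bₙ,bₙ} = ‖bₙ‖² T bₙ → 0`, while `{T bₙ, T bₙ, T bₙ} → {w,w,w}` by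
continuity of the triple product, and the two differ by at most `C ‖bₙ‖³`. By anisotropy the
separating space is `{0}`, so the limit `z` is itself `0`.
-/

/-- A (real) Jordan Banach triple: a Banach space with a continuous triple
product, (real-)linear in each variable, symmetric in the outer variables and
satisfying the Jordan identity. -/
structure JordanBanachTriple (E : Type*) [NormedAddCommGroup E] [NormedSpace ℝ E] where
  tp : E → E → E → E
  add_left : ∀ a a' b c, tp (a + a') b c = tp a b c + tp a' b c
  smul_left : ∀ (r : ℝ) a b c, tp (r • a) b c = r • tp a b c
  add_mid : ∀ a b b' c, tp a (b + b') c = tp a b c + tp a b' c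
  smul_mid : ∀ (r : ℝ) a b c, tp a (r • b) c = r • tp a b c
  symm : ∀ a b c, tp a b c = tp c b a
  jordan : ∀ a b x y z,
    tp a b (tp x y z) = tp (tp a b x) y z - tp x (tp b a y) z + tp x y (tp a b z)
  bound : ∃ C > 0, ∀ a b c, ‖tp a b c‖ ≤ C * ‖a‖ * ‖b‖ * ‖c‖

def sepSpace {X Y : Type*} [NormedAddCommGroup X] [NormedAddCommGroup Y]
    (T : X → Y) : Set Y :=
  {z | ∃ x : ℕ → X, Tendsto x atTop (𝓝 0) ∧ Tendsto (fun n => T (x n)) atTop (𝓝 z)}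

/-- The Hilbert-space triple product `{a,b,c} = ½(⟨a,b⟩c + ⟨c,b⟩a)`, with
`⟨·,·⟩` linear in the first variable. -/
noncomputable def htp {H : Type*} [NormedAddCommGroup H] [InnerProductSpace ℂ H]
    (a b c : H) : H :=
  (2 : ℂ)⁻¹ • ((inner ℂ b a : ℂ) • c + (inner ℂ b c : ℂ) • a)

theorem htp_self {H : Type*} [NormedAddCommGroup H] [InnerProductSpace ℂ H] (y : H) :
    htp y y y = (‖y‖ ^ 2 : ℝ) • y := by
  rw [htp, inner_self_eq_norm_sq_to_K, ← two_smul ℂ, smul_smul, smul_smul,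
    inv_mul_cancel₀ two_ne_zero, one_mul, ← RCLike.ofReal_pow,
    RCLike.real_smul_eq_coe_smul (K := ℂ)]

namespace JordanBanachTriple

variable {E : Type*} [NormedAddCommGroup E] [NormedSpace ℝ E] (JF : JordanBanachTriple E)

theorem tp_zero_mid (a c : E) : JF.tp a 0 c = 0 := by
  simpa using JF.smul_mid 0 a 0 c

theorem tp_sub_left (a a' b c : E) : JF.tp (a - a') b c = JF.tp a b c - JF.tp a' b c :=
  eq_sub_of_add_eq (by rw [← JF.add_left, sub_add_cancel])

theorem tp_sub_mid (a b b' c : E) : JF.tp a (b - b') c = JF.tp a b c - JF.tp a b' c :=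
  eq_sub_of_add_eq (by rw [← JF.add_mid, sub_add_cancel])

theorem tp_sub_right (a b c c' : E) : JF.tp a b (c - c') = JF.tp a b c - JF.tp a b c' := by
  rw [JF.symm, tp_sub_left, JF.symm c, JF.symm c']

theorem tp_sub_tp (a b c a' b' c' : E) :
    JF.tp a b c - JF.tp a' b' c' =
      JF.tp (a - a') b c + JF.tp a' (b - b') c + JF.tp a' b' (c - c') := by
  rw [tp_sub_left, tp_sub_mid, tp_sub_right]
  abel

theorem tendsto_tp {α : Type*} {l : Filter α} {u v w : α → E} {a b c : E}
    (hu : Tendsto u l (𝓝 a)) (hv : Tendsto v l (𝓝 b)) (hw : Tendsto w l (𝓝 c)) :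
    Tendsto (fun n => JF.tp (u n) (v n) (w n)) l (𝓝 (JF.tp a b c)) := by
  obtain ⟨D, -, hD⟩ := JF.bound
  have hv' := hv.norm
  have hw' := hw.norm
  rw [tendsto_iff_norm_sub_tendsto_zero] at hu hv hw ⊢
  refine squeeze_zero (fun _ => norm_nonneg _) (fun n => ?_) (g := fun n =>
    D * ‖u n - a‖ * ‖v n‖ * ‖w n‖ + D * ‖a‖ * ‖v n - b‖ * ‖w n‖ + D * ‖a‖ * ‖b‖ * ‖w n - c‖) ?_
  · rw [tp_sub_tp]
    exact norm_add₃_le.trans (add_le_add_three (hD _ _ _) (hD _ _ _) (hD _ _ _))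
  · have hconst {r : ℝ} : Tendsto (fun _ : α => r) l (𝓝 r) := tendsto_const_nhds
    simpa using ((((hconst.mul hu).mul hv').mul hw').add ((hconst.mul hv).mul hw')).add
      (hconst.mul hw)

theorem tp_self_eq_zero_of_mem_sepSpace {H : Type*} [NormedAddCommGroup H]
    [InnerProductSpace ℂ H] (T : H →ₗ[ℝ] E) (C : ℝ)
    (h : ∀ a b c : H, ‖T (htp a b c) - JF.tp (T a) (T b) (T c)‖ ≤ C * ‖a‖ * ‖b‖ * ‖c‖)
    {w : E} (hw : w ∈ sepSpace T) : JF.tp w w w = 0 := by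
  obtain ⟨b, hb, hTb⟩ := hw
  have hcube : Tendsto (fun n => T (htp (b n) (b n) (b n))) atTop (𝓝 0) := by
    simp only [htp_self, map_smul]
    simpa using (hb.norm.pow 2).smul hTb
  have hdefect : Tendsto (fun n => T (htp (b n) (b n) (b n)) -
      JF.tp (T (b n)) (T (b n)) (T (b n))) atTop (𝓝 0) :=
    squeeze_zero_norm (fun n => h _ _ _) <| by
      simpa using ((tendsto_const_nhds.mul hb.norm).mul hb.norm).mul hb.norm
  exact tendsto_nhds_unique (JF.tendsto_tp hTb hTb hTb) (by simpa using hcube.sub hdefect)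

end JordanBanachTriple

theorem stmt15_general {H F : Type*}
    [NormedAddCommGroup H] [InnerProductSpace ℂ H]
    [NormedAddCommGroup F] [NormedSpace ℝ F]
    (JF : JordanBanachTriple F)
    (haniso : ∀ z : F, JF.tp z z z = 0 → z = 0)
    (T : H →ₗ[ℝ] F) (C : ℝ)
    (h : ∀ a b c : H, ‖T (htp a b c) - JF.tp (T a) (T b) (T c)‖ ≤ C * ‖a‖ * ‖b‖ * ‖c‖)
    (x : ℕ → H) (z : F) (hx : Tendsto x atTop (𝓝 0))
    (hTx : Tendsto (fun n => T (x n)) atTop (𝓝 z)) :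
    ∀ a c : H, JF.tp (T a) z (T c) = 0 := by
  obtain rfl : z = 0 := haniso z (JF.tp_self_eq_zero_of_mem_sepSpace T C h ⟨x, hx, hTx⟩)
  exact fun a c => JF.tp_zero_mid (T a) (T c)

theorem stmt15 {H F : Type*}
    [NormedAddCommGroup H] [InnerProductSpace ℂ H] [CompleteSpace H]
    [NormedAddCommGroup F] [NormedSpace ℝ F] [CompleteSpace F]
    (JF : JordanBanachTriple F)
    (haniso : ∀ z : F, JF.tp z z z = 0 → z = 0)
    (T : H →ₗ[ℝ] F) (C : ℝ) (hC : 0 < C)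
    (h : ∀ a b c : H, ‖T (htp a b c) - JF.tp (T a) (T b) (T c)‖ ≤ C * ‖a‖ * ‖b‖ * ‖c‖)
    (x : ℕ → H) (z : F) (hx : Tendsto x atTop (𝓝 0))
    (hTx : Tendsto (fun n => T (x n)) atTop (𝓝 z)) :
    ∀ a c : H, JF.tp (T a) z (T c) = 0 :=
  stmt15_general JF haniso T C h x z hx hTx
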